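/- arXiv:2111.03264 — 2 statements merged into one kernel-verified Lean document; each statement's English description precedes it below -/
import Mathlib

section
/- Let μ > 0 and Y, Λ ∈ ℝ^{N×N}, and let R = T_{1/μ}(Y + Λ/μ) applied entrywise. Then Z = R − diag(R) (i.e., R with its diagonal entries replaced by zero) is a global minimizer over Z ∈ ℝ^{N×N} of the function Z ↦ ‖Z‖₁ + (μ/2)‖Y − Z + diag(Z)‖_F² + tr(Λᵀ(Y − Z + diag(Z))), where ‖Z‖₁ = Σ_{i,j}|Z_{ij}| and diag(Z) keeps the diagonal of Z and zeros out the off-diagonal. -/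
open Matrix BigOperators

/-- Scalar soft-threshold operator `T_η(x) = sign(x)·max(|x| − η, 0)`. -/
noncomputable def softT (η x : ℝ) : ℝ := Real.sign x * max (|x| - η) 0

/-- `diagPart M` keeps the diagonal of `M` and zeros out the off-diagonal. -/
def diagPart {N : ℕ} (M : Matrix (Fin N) (Fin N) ℝ) : Matrix (Fin N) (Fin N) ℝ :=
  Matrix.diagonal (fun i => M i i)

/-- Squared Frobenius norm of a real matrix. -/
noncomputable def frobSq {m n : ℕ} (M : Matrix (Fin m) (Fin n) ℝ) : ℝ :=
  ∑ i, ∑ j, (M i j) ^ 2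

lemma key_soft (η b z : ℝ) (hη : 0 ≤ η) :
    η * |softT η b| + (softT η b - b)^2/2 ≤ η * |z| + (z - b)^2/2 := by
  unfold softT
  rcases lt_trichotomy b 0 with hb | hb | hb
  · rcases le_or_gt (-b) η with h | h
    · rw [abs_of_neg hb, max_eq_right (by linarith), mul_zero, abs_zero]
      nlinarith [le_abs_self (b*z), abs_mul b z, abs_of_neg hb,
        mul_le_mul_of_nonneg_right h (abs_nonneg z), sq_nonneg z]
    · rw [abs_of_neg hb, Real.sign_of_neg hb, max_eq_left (by linarith)]
      have e : (-1 : ℝ) * (-b - η) = b + η := by ring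
      rw [e, abs_of_neg (by linarith)]
      nlinarith [neg_abs_le z, sq_nonneg (z - b - η)]
  · subst hb
    simp [Real.sign_zero]
    nlinarith [abs_nonneg z, sq_nonneg z]
  · rcases le_or_gt b η with h | h
    · rw [abs_of_pos hb, max_eq_right (by linarith), mul_zero, abs_zero]
      nlinarith [le_abs_self (b*z), abs_mul b z, abs_of_pos hb,
        mul_le_mul_of_nonneg_right h (abs_nonneg z), sq_nonneg z]
    · rw [abs_of_pos hb, Real.sign_of_pos hb, max_eq_left (by linarith), one_mul,
        abs_of_pos (by linarith : (0:ℝ) < b - η)]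
      nlinarith [le_abs_self z, sq_nonneg (z - b + η)]

lemma offdiag_soft (μ a l z : ℝ) (hμ : 0 < μ) :
    |softT (1/μ) (a + μ⁻¹ * l)| + μ/2 * (a - softT (1/μ) (a + μ⁻¹ * l))^2
      + l * (a - softT (1/μ) (a + μ⁻¹ * l))
    ≤ |z| + μ/2 * (a - z)^2 + l * (a - z) := by
  have hμ' : μ ≠ 0 := hμ.ne'
  set s := softT (1/μ) (a + μ⁻¹ * l) with hs
  have h := key_soft (1/μ) (a + μ⁻¹ * l) z (by positivity)
  have expand : ∀ w : ℝ, μ * ((1/μ) * |w| + (w - (a + μ⁻¹ * l))^2/2)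
      = |w| + μ/2 * (a - w)^2 + l * (a - w) + μ⁻¹ * l^2/2 := by
    intro w; field_simp; ring
  have h2 := mul_le_mul_of_nonneg_left h hμ.le
  rw [expand s, expand z] at h2
  linarith

/-- With `R = T_{1/μ}(Y + Λ/μ)` entrywise, `Z = R − diag(R)` is a global minimizer of
`Z ↦ ‖Z‖₁ + (μ/2)‖Y − Z + diag(Z)‖_F² + tr(Λᵀ(Y − Z + diag(Z)))`. -/
theorem stmt6 {N : ℕ} (μ : ℝ) (hμ : 0 < μ) (Y Λmat : Matrix (Fin N) (Fin N) ℝ) :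
    let R : Matrix (Fin N) (Fin N) ℝ :=
      Matrix.of fun i j => softT (1 / μ) ((Y + μ⁻¹ • Λmat) i j)
    let Zstar := R - diagPart R
    ∀ Z : Matrix (Fin N) (Fin N) ℝ,
      (∑ i, ∑ j, |Zstar i j|) + (μ / 2) * frobSq (Y - Zstar + diagPart Zstar)
          + Matrix.trace (Λmatᵀ * (Y - Zstar + diagPart Zstar))
        ≤ (∑ i, ∑ j, |Z i j|) + (μ / 2) * frobSq (Y - Z + diagPart Z)
            + Matrix.trace (Λmatᵀ * (Y - Z + diagPart Z)) := by
  intro R Zstar Z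
  have htr : ∀ M : Matrix (Fin N) (Fin N) ℝ,
      Matrix.trace (Λmatᵀ * M) = ∑ i, ∑ j, Λmat i j * M i j := by
    intro M
    rw [Matrix.trace]
    simp only [Matrix.diag, Matrix.mul_apply, Matrix.transpose_apply]
    exact Finset.sum_comm
  have hrw : ∀ W : Matrix (Fin N) (Fin N) ℝ,
      (∑ i, ∑ j, |W i j|) + (μ / 2) * frobSq (Y - W + diagPart W)
          + Matrix.trace (Λmatᵀ * (Y - W + diagPart W))
      = ∑ i, ∑ j, (|W i j| + μ/2 * ((Y - W + diagPart W) i j)^2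
          + Λmat i j * ((Y - W + diagPart W) i j)) := by
    intro W
    rw [htr, frobSq, Finset.mul_sum]
    simp_rw [Finset.mul_sum, ← Finset.sum_add_distrib]
  rw [hrw Zstar, hrw Z]
  refine Finset.sum_le_sum fun i _ => Finset.sum_le_sum fun j _ => ?_
  have hZs : ∀ a b, Zstar a b = R a b - (if a = b then R a a else 0) := by
    intro a b
    simp [Zstar, diagPart, Matrix.diagonal_apply]
  by_cases hij : i = j
  · subst hij
    have h1 : (Y - Zstar + diagPart Zstar) i i = Y i i := by
      simp [diagPart, Matrix.diagonal_apply]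
    have h2 : (Y - Z + diagPart Z) i i = Y i i := by
      simp [diagPart, Matrix.diagonal_apply]
    rw [h1, h2]
    have : Zstar i i = 0 := by rw [hZs]; simp
    rw [this]
    simp [abs_nonneg]
  · have h1 : (Y - Zstar + diagPart Zstar) i j = Y i j - Zstar i j := by
      simp [diagPart, Matrix.diagonal_apply, hij]
    have h2 : (Y - Z + diagPart Z) i j = Y i j - Z i j := by
      simp [diagPart, Matrix.diagonal_apply, hij]
    rw [h1, h2]
    have h3 : Zstar i j = softT (1/μ) (Y i j + μ⁻¹ * Λmat i j) := by
      rw [hZs]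
      simp [R, hij, Matrix.add_apply, Matrix.smul_apply, smul_eq_mul]
    rw [h3]
    exact offdiag_soft μ (Y i j) (Λmat i j) (Z i j) hμ
end

section
/- Let D ∈ ℝ^{N×N} be a diagonal matrix with strictly positive diagonal entries, λ₂ > 0, μ₁ > 0, μ₂ > 0, X ∈ ℝ^{N×d}, E, Λ₁ ∈ ℝ^{N×d}, L̃₀ ∈ ℝ^{N×N}, and let W_1,…,W_m ∈ ℝ^{N×N} satisfy Σ_{j=1}^m W_jᵀW_j = I, with Q_j, Λ_{2,j} ∈ ℝ^{N×d}. Then the matrix λ₂D + μ₁L̃₀ᵀL̃₀ + μ₂I is invertible, and the function U ↦ (λ₂/2)tr((U−X)ᵀD(U−X)) + (μ₁/2)‖L̃₀U − E‖_F² + tr(Λ₁ᵀ(L̃₀U − E)) + Σ_j (μ₂/2)‖Q_j − W_jU‖_F² + Σ_j tr(Λ_{2,j}ᵀ(Q_j − W_jU)) has the unique global minimizer U = (λ₂D + μ₁L̃₀ᵀL̃₀ + μ₂I)⁻¹ (λ₂DX + μ₁L̃₀ᵀE − L̃₀ᵀΛ₁ + Σ_j W_jᵀ(μ₂Q_j +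 Λ_{2,j})). -/
/-!
The objective is quadratic in `U`. Each term is a quadratic or linear function composed with an
affine map of `U`, so its Taylor expansion is exact, and summing them gives Hessian
`λ₂D + μ₁L₀ᵀL₀ + μ₂ ∑ⱼ WⱼᵀWⱼ = M` (the frame is tight) and gradient `M U - B`, where `B` is the
right-hand side of the update. As `M` is positive definite it is invertible, the gradient vanishes
at `U* = M⁻¹ B`, and `f (U* + V) = f U* + tr(Vᵀ M V) / 2 > f U*` for every `V ≠ 0`.
-/

open Matrix BigOperators

theorem frobSq_eq_trace {m n : ℕ} (A : Matrix (Fin m) (Fin n) ℝ) :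
    frobSq A = trace (Aᵀ * A) := by
  simp only [frobSq, trace, diag_apply, mul_apply, transpose_apply, sq]
  exact Finset.sum_comm

section QuadraticExpansion

variable {n k d : Type*} [Fintype n] [Fintype k] [Fintype d]

theorem Matrix.PosDef.trace_transpose_mul_mul_pos {M : Matrix n n ℝ} (hM : M.PosDef)
    {V : Matrix n d ℝ} (hV : V ≠ 0) : 0 < trace (Vᵀ * M * V) := by
  have hcol : trace (Vᵀ * M * V) = ∑ c, Vᵀ c ⬝ᵥ (M *ᵥ Vᵀ c) := by
    rw [Matrix.mul_assoc]; rfl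
  obtain ⟨c, hc⟩ : ∃ c, Vᵀ c ≠ 0 := by
    by_contra! h
    exact hV (by ext i j; simpa using congrFun (h j) i)
  rw [hcol]
  refine Finset.sum_pos' (fun c _ => ?_) ⟨c, Finset.mem_univ c, ?_⟩
  · simpa using hM.posSemidef.dotProduct_mulVec_nonneg (Vᵀ c)
  · simpa using hM.dotProduct_mulVec_pos hc

/-- `g` is the gradient and `H` the Hessian of `φ` for the inner product `tr(Aᵀ B)`. -/
def HasQuadraticExpansion (φ : Matrix n d ℝ → ℝ) (g : Matrix n d ℝ → Matrix n d ℝ)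
    (H : Matrix n n ℝ) : Prop :=
  ∀ U V, φ (U + V) = φ U + trace (Vᵀ * g U) + trace (Vᵀ * H * V) / 2

namespace HasQuadraticExpansion

variable {φ ψ : Matrix n d ℝ → ℝ} {g g' : Matrix n d ℝ → Matrix n d ℝ} {H H' : Matrix n n ℝ}

theorem add (hφ : HasQuadraticExpansion φ g H) (hψ : HasQuadraticExpansion ψ g' H') :
    HasQuadraticExpansion (fun U => φ U + ψ U) (fun U => g U + g' U) (H + H') := by
  intro U V
  dsimp only
  rw [hφ, hψ, Matrix.mul_add, Matrix.mul_add, Matrix.add_mul, trace_add, trace_add]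
  ring

theorem sum {ι : Type*} (s : Finset ι) {φ : ι → Matrix n d ℝ → ℝ}
    {g : ι → Matrix n d ℝ → Matrix n d ℝ} {H : ι → Matrix n n ℝ}
    (h : ∀ j ∈ s, HasQuadraticExpansion (φ j) (g j) (H j)) :
    HasQuadraticExpansion (fun U => ∑ j ∈ s, φ j U) (fun U => ∑ j ∈ s, g j U)
      (∑ j ∈ s, H j) := by
  intro U V
  dsimp only
  rw [Finset.sum_congr rfl fun j hj => h j hj U V]
  simp only [Finset.sum_add_distrib, Matrix.mul_sum, Matrix.sum_mul, trace_sum, Finset.sum_div]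

theorem comp_affine (hφ : HasQuadraticExpansion φ g H) (α : Matrix k d ℝ → Matrix n d ℝ)
    {A : Matrix n k ℝ} (hα : ∀ U V, α (U + V) = α U + A * V) :
    HasQuadraticExpansion (fun U => φ (α U)) (fun U => Aᵀ * g (α U)) (Aᵀ * H * A) := by
  intro U V
  dsimp only
  rw [hα, hφ]
  simp only [transpose_mul, Matrix.mul_assoc]

theorem lt_of_ne (hφ : HasQuadraticExpansion φ g H) {U₀ U : Matrix n d ℝ} (hg : g U₀ = 0)
    (hH : ∀ V : Matrix n d ℝ, V ≠ 0 → 0 < trace (Vᵀ * H * V)) (hU : U ≠ U₀) : φ U₀ < φ U := by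
  have h := hφ U₀ (U - U₀)
  rw [add_sub_cancel, hg, Matrix.mul_zero, trace_zero, add_zero] at h
  linarith [hH _ (sub_ne_zero.2 hU)]

end HasQuadraticExpansion

theorem hasQuadraticExpansion_quadraticForm (c : ℝ) {P : Matrix n n ℝ} (hP : Pᵀ = P) :
    HasQuadraticExpansion (fun R : Matrix n d ℝ => c / 2 * trace (Rᵀ * P * R))
      (fun R => c • (P * R)) (c • P) := by
  intro R V
  have hcross : trace (Rᵀ * (P * V)) = trace (Vᵀ * (P * R)) := by
    rw [← trace_transpose, transpose_mul, transpose_mul, hP, transpose_transpose, Matrix.mul_assoc]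
  simp only [transpose_add, Matrix.add_mul, Matrix.mul_add, trace_add, Matrix.mul_smul,
    Matrix.smul_mul, trace_smul, smul_eq_mul, hcross, Matrix.mul_assoc]
  ring

theorem hasQuadraticExpansion_trace_transpose_mul (Λ : Matrix n d ℝ) :
    HasQuadraticExpansion (fun R => trace (Λᵀ * R)) (fun _ => Λ) 0 := by
  intro R V
  have hswap : trace (Λᵀ * V) = trace (Vᵀ * Λ) := by
    rw [← trace_transpose, transpose_mul, transpose_transpose]
  simp [Matrix.mul_add, trace_add, hswap]

end QuadraticExpansion

theorem hasQuadraticExpansion_frobSq {m n : ℕ} (c : ℝ) :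
    HasQuadraticExpansion (fun R : Matrix (Fin m) (Fin n) ℝ => c / 2 * frobSq R) (fun R => c • R)
      (c • 1) := by
  simpa only [Matrix.mul_one, Matrix.one_mul, ← frobSq_eq_trace] using
    hasQuadraticExpansion_quadraticForm (d := Fin n) c (transpose_one (n := Fin m))

theorem hasQuadraticExpansion_dotObjective {N d m : ℕ} (D : Matrix (Fin N) (Fin N) ℝ)
    (hD : Dᵀ = D) (lam2 μ₁ μ₂ : ℝ) (X E Λ₁ : Matrix (Fin N) (Fin d) ℝ)
    (L₀ : Matrix (Fin N) (Fin N) ℝ) (W : Fin m → Matrix (Fin N) (Fin N) ℝ)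
    (hW : ∑ j, (W j)ᵀ * W j = 1) (Q Λ₂ : Fin m → Matrix (Fin N) (Fin d) ℝ) :
    HasQuadraticExpansion
      (fun U => (lam2 / 2) * trace ((U - X)ᵀ * D * (U - X))
        + (μ₁ / 2) * frobSq (L₀ * U - E)
        + trace (Λ₁ᵀ * (L₀ * U - E))
        + (∑ j, (μ₂ / 2) * frobSq (Q j - W j * U))
        + (∑ j, trace ((Λ₂ j)ᵀ * (Q j - W j * U))))
      (fun U => (lam2 • D + μ₁ • (L₀ᵀ * L₀) + μ₂ • 1) * U
        - (lam2 • (D * X) + μ₁ • (L₀ᵀ * E) - L₀ᵀ * Λ₁ + ∑ j, (W j)ᵀ * (μ₂ • Q j + Λ₂ j)))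
      (lam2 • D + μ₁ • (L₀ᵀ * L₀) + μ₂ • 1) := by
  have hX : ∀ U V : Matrix (Fin N) (Fin d) ℝ,
      U + V - X = (U - X) + (1 : Matrix (Fin N) (Fin N) ℝ) * V := by
    intro U V; rw [Matrix.one_mul]; abel
  have hE : ∀ U V : Matrix (Fin N) (Fin d) ℝ, L₀ * (U + V) - E = (L₀ * U - E) + L₀ * V := by
    intro U V; rw [Matrix.mul_add]; abel
  have hQ : ∀ j (U V : Matrix (Fin N) (Fin d) ℝ),
      Q j - W j * (U + V) = (Q j - W j * U) + (-W j) * V := by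
    intro j U V; rw [Matrix.mul_add, Matrix.neg_mul]; abel
  have h := (((((hasQuadraticExpansion_quadraticForm lam2 hD).comp_affine (· - X) hX).add
    ((hasQuadraticExpansion_frobSq μ₁).comp_affine (L₀ * · - E) hE)).add
    ((hasQuadraticExpansion_trace_transpose_mul Λ₁).comp_affine (L₀ * · - E) hE)).add
    (HasQuadraticExpansion.sum Finset.univ fun j _ =>
      (hasQuadraticExpansion_frobSq μ₂).comp_affine (fun U => Q j - W j * U) (hQ j))).add
    (HasQuadraticExpansion.sum Finset.univ fun j _ =>
      (hasQuadraticExpansion_trace_transpose_mul (Λ₂ j)).comp_affine (fun U => Q j - W j * U)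
        (hQ j))
  convert h using 1
  · funext U
    simp only [transpose_one, Matrix.one_mul, transpose_neg, Matrix.neg_mul, Matrix.mul_smul,
      Matrix.mul_sub, Matrix.mul_add, Matrix.add_mul, Matrix.smul_mul, Finset.sum_neg_distrib,
      Finset.sum_sub_distrib, Finset.sum_add_distrib, ← Finset.smul_sum, ← Matrix.mul_assoc,
      ← Matrix.sum_mul, hW]
    module
  · simp only [transpose_one, Matrix.one_mul, Matrix.mul_one, transpose_neg, Matrix.neg_mul,
      Matrix.mul_neg, neg_neg, neg_zero, Matrix.mul_zero, Matrix.zero_mul, Finset.sum_const_zero,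
      add_zero, Matrix.smul_mul, Matrix.mul_smul, smul_neg, ← Finset.smul_sum, hW]

/-- U-update of the full DoT ADMM scheme: with a positive diagonal `D = diagonal dv`,
`λ₂, μ₁, μ₂ > 0`, and tight-frame operators `Wⱼ` (with `∑ⱼ Wⱼᵀ Wⱼ = I`), the matrix
`λ₂D + μ₁L₀ᵀL₀ + μ₂I` is invertible and the function
`U ↦ (λ₂/2)tr((U−X)ᵀD(U−X)) + (μ₁/2)‖L₀U − E‖_F² + tr(Λ₁ᵀ(L₀U − E))
     + ∑ⱼ (μ₂/2)‖Qⱼ − WⱼU‖_F² + ∑ⱼ tr(Λ₂ⱼᵀ(Qⱼ − WⱼU))`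
has the unique global minimizer
`U = (λ₂D + μ₁L₀ᵀL₀ + μ₂I)⁻¹ (λ₂DX + μ₁L₀ᵀE − L₀ᵀΛ₁ + ∑ⱼ Wⱼᵀ(μ₂Qⱼ + Λ₂ⱼ))`. -/
theorem stmt11 {N d m : ℕ} (dv : Fin N → ℝ) (hdv : ∀ i, 0 < dv i)
    (lam2 μ₁ μ₂ : ℝ) (hlam2 : 0 < lam2) (hμ₁ : 0 < μ₁) (hμ₂ : 0 < μ₂)
    (X E Λ₁ : Matrix (Fin N) (Fin d) ℝ) (L₀ : Matrix (Fin N) (Fin N) ℝ)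
    (W : Fin m → Matrix (Fin N) (Fin N) ℝ) (hW : ∑ j, (W j)ᵀ * W j = 1)
    (Q Λ₂ : Fin m → Matrix (Fin N) (Fin d) ℝ) :
    let D : Matrix (Fin N) (Fin N) ℝ := Matrix.diagonal dv
    let M : Matrix (Fin N) (Fin N) ℝ :=
      lam2 • D + μ₁ • (L₀ᵀ * L₀) + μ₂ • (1 : Matrix (Fin N) (Fin N) ℝ)
    let f : Matrix (Fin N) (Fin d) ℝ → ℝ := fun U =>
      (lam2 / 2) * Matrix.trace ((U - X)ᵀ * D * (U - X))
        + (μ₁ / 2) * frobSq (L₀ * U - E)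
        + Matrix.trace (Λ₁ᵀ * (L₀ * U - E))
        + (∑ j, (μ₂ / 2) * frobSq (Q j - W j * U))
        + (∑ j, Matrix.trace ((Λ₂ j)ᵀ * (Q j - W j * U)))
    let Ustar : Matrix (Fin N) (Fin d) ℝ :=
      M⁻¹ * (lam2 • (D * X) + μ₁ • (L₀ᵀ * E) - L₀ᵀ * Λ₁
              + ∑ j, (W j)ᵀ * (μ₂ • Q j + Λ₂ j))
    IsUnit M ∧ ∀ U : Matrix (Fin N) (Fin d) ℝ, U ≠ Ustar → f Ustar < f U := by
  intro D M f Ustar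
  have hM : M.PosDef :=
    (((posDef_diagonal_iff.2 hdv).smul hlam2).add_posSemidef
      (by simpa using (posSemidef_conjTranspose_mul_self L₀).smul hμ₁.le)).add
      (PosDef.one.smul hμ₂)
  refine ⟨hM.isUnit, fun U hU => ?_⟩
  have hMUstar : M * Ustar = _ :=
    mul_nonsing_inv_cancel_left _ _ ((isUnit_iff_isUnit_det M).1 hM.isUnit)
  exact (hasQuadraticExpansion_dotObjective D (diagonal_transpose dv) lam2 μ₁ μ₂ X E Λ₁ L₀ W hW
    Q Λ₂).lt_of_ne (sub_eq_zero.2 hMUstar) (fun _ hV => hM.trace_transpose_mul_mul_pos hV) hU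
end
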